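/- Fix integers ℓ ≥ 1, N_s ≥ 1, L = ℓN_s, parameters η, ξ₁,…,ξ_{N_s} ∈ ℂ with q = e^η satisfying q^{2m} ≠ 1 for 1 ≤ m ≤ ℓ, a weight function g : {0,…,ℓ} → ℂ∖{0}, a site 1 ≤ k ≤ N_s, and integers 0 ≤ i,j ≤ ℓ. Let Ê_k^{i,j(ℓ p)} be the operator on (ℂ²)^{⊗L} acting as (g(j)/g(i)) ||ℓ,i⟩⟨ℓ,j|| on the k-th block of ℓ factors and as identity elsewhere. Then for every fixed A ⊆ {1,…,ℓ} with |A| = i: Ê_k^{i,j(ℓ p)} = N̂_{i,j} · e^{−(i−j)Λ_k} · P^{(ℓ)}_{[k]} · Σ_{B⊆{1,…,ℓ}, |B|=j} χ_{1…L} (|1_A⟩⟨1_B| on block k) χ_{1…L}^{−1}, where Λ_k = ξ_k − (ℓ−1)η/2, N̂_{i,j} = (g(j)/g(i)) (F(ℓ,i)/F(ℓ,j)) e^{η(i(ℓ−i) − j(ℓ−j))/2} with F(ℓ,n) = [ℓ choose n]_q q^{−n(ℓ−n)}, P^{(ℓ)}_{[k]} is the spin-ℓ/2 projector P^{(ℓ)}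 acting on block k (identity elsewhere), and χ_{1…L} = ⊗_{m=1}^{L} diag(1, e^{w^{(ℓ)}_m}). Moreover the right-hand side is independent of the choice of A. -/

import Mathlib

/-!
The gauge `χ` is diagonal, so conjugating `|1_A⟩⟨1_B|` on block `k` by it only multiplies it
by `e^{Σ_A w − Σ_B w}`. For the complete string `w = ξ_k − (β−1)η`, the factor `e^{−Σ_B w}` is,
up to a constant depending only on `|B| = j`, the coefficient of `|1_B⟩` in `||ℓ,j⟩`, so the sum
over `B` collapses to `|1_A⟩⟨ℓ,j||`. The `|1_A⟩`-column of `P^{(ℓ)}` is the `A`-coefficient of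
`⟨ℓ,i||` times `||ℓ,i⟩`, and what remains is a scalar identity: `N̂_{i,j} e^{−(i−j)Λ_k}` is
exactly the factor that turns the accumulated coefficient into `g(j)/g(i)`.
-/

noncomputable section

/-- The q-integer `[n]_q = (qⁿ − q⁻ⁿ)/(q − q⁻¹)`. -/
def qint (q : ℂ) (n : ℕ) : ℂ := (q ^ (n : ℤ) - q ^ (-(n : ℤ))) / (q - q⁻¹)

/-- The q-factorial `[n]_q! = ∏_{m=1}^n [m]_q`. -/
def qfact (q : ℂ) (n : ℕ) : ℂ := ∏ m ∈ Finset.range n, qint q (m + 1)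

/-- The q-binomial coefficient `[l choose n]_q`. -/
def qbinom (q : ℂ) (l n : ℕ) : ℂ := qfact q l / (qfact q (l - n) * qfact q n)
/-- Index of the standard basis of `(ℂ²)^{⊗l}`: spin configurations `{0,1}^l`. -/
abbrev SpinIdx (l : ℕ) := Fin l → Fin 2

/-- Vectors in `(ℂ²)^{⊗l}`. -/
abbrev SpinVec (l : ℕ) := SpinIdx l → ℂ

/-- Operators (matrices) on `(ℂ²)^{⊗l}`. -/
abbrev SpinOp (l : ℕ) := Matrix (SpinIdx l) (SpinIdx l) ℂ

/-- The indicator configuration of a subset `A`: down spins exactly on `A`. -/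
def indFun {l : ℕ} (A : Finset (Fin l)) : SpinIdx l := fun k => if k ∈ A then 1 else 0

/-- The standard basis vector `|1_A⟩` with down spins exactly on `A`. -/
def bvec {l : ℕ} (A : Finset (Fin l)) : SpinVec l := fun ε => if ε = indFun A then 1 else 0

/-- `Σ_{a ∈ A} a`, where the site `k : Fin l` has 1-based number `k+1 ∈ {1,…,l}`. -/
def siteSum {l : ℕ} (A : Finset (Fin l)) : ℤ := ∑ a ∈ A, ((a : ℤ) + 1)

/-- Coefficient `q^{(Σ_{a∈A} a) − i·l + i(i−1)/2}`. -/
def hwt (q : ℂ) {l : ℕ} (i : ℕ) (A : Finset (Fin l)) : ℂ :=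
  q ^ (siteSum A - (i : ℤ) * (l : ℤ) + (i : ℤ) * ((i : ℤ) - 1) / 2)

/-- The spin-`l/2` basis vector `||l,i⟩`. -/
def hv (q : ℂ) (l i : ℕ) : SpinVec l :=
  ∑ A ∈ Finset.powersetCard i (Finset.univ : Finset (Fin l)), hwt q i A • bvec A

/-- The conjugate covector `⟨l,j||` (represented by its coefficient vector; the pairing
is the bilinear transpose pairing). -/
def cv (q : ℂ) (l j : ℕ) : SpinVec l :=
  ((qbinom q l j)⁻¹ * q ^ ((j : ℤ) * ((l : ℤ) - (j : ℤ)))) •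
    ∑ B ∈ Finset.powersetCard j (Finset.univ : Finset (Fin l)), hwt q j B • bvec B

/-- The rank-one operator `|u⟩⟨v|` (transpose pairing). -/
def rankOne {l : ℕ} (u v : SpinVec l) : SpinOp l := Matrix.of fun ε ε' => u ε * v ε'

/-- The spin-`l/2` projector `P^{(l)} = Σ_{n=0}^{l} ||l,n⟩⟨l,n||`. -/
def proj (q : ℂ) (l : ℕ) : SpinOp l :=
  ∑ n ∈ Finset.range (l + 1), rankOne (hv q l n) (cv q l n)

/-- The elementary operator `e_k^{a,b}` acting on the k-th tensor factor. -/
def elem {l : ℕ} (k : Fin l) (a b : Fin 2) : SpinOp l :=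
  Matrix.of fun ε ε' => if ε k = a ∧ ε' k = b ∧ ∀ m, m ≠ k → ε m = ε' m then 1 else 0

/-- The ordered product `e_1^{e'_1,e_1} ⋯ e_l^{e'_l,e_l}`. -/
def elemProd {l : ℕ} (e' e : Fin l → Fin 2) : SpinOp l :=
  (List.ofFn fun k : Fin l => elem k (e' k) (e k)).prod

/-- The gauge matrix `⊗_s diag(1, e^{w s})`. -/
def gaugeM {S : Type*} [Fintype S] [DecidableEq S] (w : S → ℂ) :
    Matrix (S → Fin 2) (S → Fin 2) ℂ :=
  Matrix.diagonal fun ε => ∏ s, if ε s = 1 then Complex.exp (w s) else 1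
/-- Sites of the chain of `Ns` blocks of `l` spin-1/2 sites: block `b`, position `β`
(1-based site number `l·b + β + 1`; lexicographic order is the site order). -/
abbrev FSite (l Ns : ℕ) := Fin Ns × Fin l

/-- Spin configurations of the full chain `(ℂ²)^{⊗(l·Ns)}`. -/
abbrev FIdx2 (l Ns : ℕ) := FSite l Ns → Fin 2

/-- Operators on the full chain. -/
abbrev FOp (l Ns : ℕ) := Matrix (FIdx2 l Ns) (FIdx2 l Ns) ℂ

/-- Embed an operator on one block of `l` factors into the full chain (block `b`,
identity elsewhere). -/
def embed {l Ns : ℕ} (b : Fin Ns) (M : SpinOp l) : FOp l Ns :=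
  Matrix.of fun ε ε' =>
    if ∀ s : FSite l Ns, s.1 ≠ b → ε s = ε' s then
      M (fun β => ε (b, β)) (fun β => ε' (b, β)) else 0

/-- The complete `l`-string inhomogeneities `w^{(l)}_{l(b−1)+β} = ξ_b − (β−1)η`. -/
def wstring (l Ns : ℕ) (η : ℂ) (ξ : Fin Ns → ℂ) : FSite l Ns → ℂ :=
  fun s => ξ s.1 - (s.2.val : ℂ) * η

/-- The full projector `P^{(l)}_{1…L} = ⊗_{b=1}^{Ns} P^{(l)}` (one per block). -/
def projFull (q : ℂ) (l Ns : ℕ) : FOp l Ns :=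
  Matrix.of fun ε ε' => ∏ b : Fin Ns, proj q l (fun β => ε (b, β)) (fun β => ε' (b, β))

/-- The normalization `F(l,n) = [l choose n]_q q^{−n(l−n)}`. -/
def Fnorm (q : ℂ) (l n : ℕ) : ℂ := qbinom q l n * q ^ (-(n : ℤ) * ((l : ℤ) - (n : ℤ)))

/-- The normalization factor `N̂_{i,j} = (g(j)/g(i))·(F(l,i)/F(l,j))·e^{η(i(l−i)−j(l−j))/2}`. -/
def Nhat (q η : ℂ) (g : ℕ → ℂ) (l i j : ℕ) : ℂ :=
  (g j / g i) * (Fnorm q l i / Fnorm q l j) *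
    Complex.exp (η * (((i : ℂ) * ((l : ℂ) - (i : ℂ)) - (j : ℂ) * ((l : ℂ) - (j : ℂ))) / 2))

open Finset
open scoped Matrix

lemma zpow_sub_zpow_neg_ne_zero {K : Type*} [Field K] {q : K} (hq : q ≠ 0) {m : ℕ}
    (h : q ^ (2 * m) ≠ 1) : q ^ (m : ℤ) - q ^ (-(m : ℤ)) ≠ 0 := by
  intro h0
  apply h
  have : q ^ (m : ℤ) * q ^ (m : ℤ) = q ^ (-(m : ℤ)) * q ^ (m : ℤ) := by rw [sub_eq_zero.mp h0]
  rw [← zpow_add₀ hq, ← zpow_add₀ hq, neg_add_cancel, zpow_zero, ← two_mul] at this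
  exact_mod_cast this

section QNumbers

variable {q : ℂ} {l : ℕ} (hq : q ≠ 0) (hroot : ∀ m : ℕ, 1 ≤ m → m ≤ l → q ^ (2 * m) ≠ 1)
include hq hroot

lemma qint_ne_zero {m : ℕ} (h1 : 1 ≤ m) (hm : m ≤ l) : qint q m ≠ 0 := by
  have hden := zpow_sub_zpow_neg_ne_zero hq (hroot 1 le_rfl (h1.trans hm))
  rw [Nat.cast_one, zpow_one, zpow_neg_one] at hden
  exact div_ne_zero (zpow_sub_zpow_neg_ne_zero hq (hroot m h1 hm)) hden

lemma qfact_ne_zero {n : ℕ} (hn : n ≤ l) : qfact q n ≠ 0 :=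
  prod_ne_zero_iff.mpr fun m hm =>
    qint_ne_zero hq hroot (Nat.le_add_left 1 m) ((mem_range.mp hm).trans_le hn)

lemma qbinom_ne_zero {n : ℕ} (hn : n ≤ l) : qbinom q l n ≠ 0 :=
  div_ne_zero (qfact_ne_zero hq hroot le_rfl)
    (mul_ne_zero (qfact_ne_zero hq hroot (Nat.sub_le l n)) (qfact_ne_zero hq hroot hn))

end QNumbers

section Block

variable {l : ℕ}

lemma rankOne_eq_vecMulVec (u v : SpinVec l) : rankOne u v = Matrix.vecMulVec u v := rfl

lemma indFun_injective : Function.Injective (indFun (l := l)) := by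
  intro A B h
  ext a
  have := congrFun h a
  by_cases hA : a ∈ A <;> by_cases hB : a ∈ B <;> simp_all [indFun]

lemma bvec_eq_single (A : Finset (Fin l)) : bvec A = Pi.single (indFun A) 1 := by
  funext ε
  simp [bvec, Pi.single_apply]

lemma sum_smul_bvec_apply_indFun (s : Finset (Finset (Fin l))) (c : Finset (Fin l) → ℂ)
    (A : Finset (Fin l)) : (∑ B ∈ s, c B • bvec B) (indFun A) = if A ∈ s then c A else 0 := by
  simp [bvec, indFun_injective.eq_iff, eq_comm (a := A)]

lemma hv_apply_indFun (q : ℂ) (n : ℕ) (A : Finset (Fin l)) :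
    hv q l n (indFun A) = if A.card = n then hwt q n A else 0 := by
  simp only [hv, sum_smul_bvec_apply_indFun, mem_powersetCard_univ]

lemma cv_eq_smul_hv (q : ℂ) (n : ℕ) :
    cv q l n = ((qbinom q l n)⁻¹ * q ^ ((n : ℤ) * ((l : ℤ) - (n : ℤ)))) • hv q l n := rfl

lemma proj_mulVec_bvec (q : ℂ) (A : Finset (Fin l)) :
    proj q l *ᵥ bvec A = cv q l A.card (indFun A) • hv q l A.card := by
  have hA : A.card ∈ range (l + 1) :=
    mem_range.mpr (Nat.lt_succ_of_le (card_le_univ A |>.trans_eq (Fintype.card_fin l)))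
  ext ε
  rw [bvec_eq_single, Matrix.mulVec_single_one, Matrix.col_apply, proj, Matrix.sum_apply,
    sum_eq_single_of_mem _ hA]
  · simp [rankOne, mul_comm]
  · intro n _ hn
    simp [rankOne, cv_eq_smul_hv, hv_apply_indFun, Ne.symm hn]

end Block

section Gauge

variable {S : Type*} [Fintype S] [DecidableEq S]

def downWeight (w : S → ℂ) (ε : S → Fin 2) : ℂ := ∑ s, if ε s = 1 then w s else 0

lemma gaugeM_eq_diagonal_exp (w : S → ℂ) :
    gaugeM w = Matrix.diagonal fun ε => Complex.exp (downWeight w ε) := by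
  simp only [gaugeM, downWeight, Complex.exp_sum, apply_ite Complex.exp, Complex.exp_zero]

lemma diagonal_exp_mul_mul_inv {n : Type*} [Fintype n] [DecidableEq n] (f : n → ℂ)
    (M : Matrix n n ℂ) :
    Matrix.diagonal (fun a => Complex.exp (f a)) * M *
        (Matrix.diagonal fun a => Complex.exp (f a))⁻¹ =
      Matrix.of fun a b => Complex.exp (f a - f b) * M a b := by
  have hinv : (Matrix.diagonal fun a => Complex.exp (f a))⁻¹ =
      Matrix.diagonal fun a => Complex.exp (-f a) :=
    Matrix.inv_eq_right_inv <| by simp [Matrix.diagonal_mul_diagonal, ← Complex.exp_add]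
  ext a b
  simp [hinv, Matrix.diagonal_mul, Matrix.mul_diagonal, sub_eq_add_neg, Complex.exp_add,
    mul_right_comm]

lemma gaugeM_mul_mul_inv (w : S → ℂ) (M : Matrix (S → Fin 2) (S → Fin 2) ℂ) :
    gaugeM w * M * (gaugeM w)⁻¹ =
      Matrix.of fun ε ε' => Complex.exp (downWeight w ε - downWeight w ε') * M ε ε' := by
  rw [gaugeM_eq_diagonal_exp, diagonal_exp_mul_mul_inv]

lemma downWeight_indFun {l : ℕ} (v : Fin l → ℂ) (A : Finset (Fin l)) :
    downWeight v (indFun A) = ∑ a ∈ A, v a := by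
  simp [downWeight, indFun, Finset.sum_ite_mem]

lemma gaugeM_conj_rankOne_bvec {l : ℕ} (v : Fin l → ℂ) (A B : Finset (Fin l)) :
    gaugeM v * rankOne (bvec A) (bvec B) * (gaugeM v)⁻¹ =
      Complex.exp ((∑ a ∈ A, v a) - ∑ b ∈ B, v b) • rankOne (bvec A) (bvec B) := by
  rw [gaugeM_mul_mul_inv]
  ext ε ε'
  by_cases hε : ε = indFun A <;> by_cases hε' : ε' = indFun B <;>
    simp [rankOne, bvec, hε, hε', downWeight_indFun]

end Gauge

section Embed

variable {l Ns : ℕ}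

lemma embed_smul (b : Fin Ns) (c : ℂ) (M : SpinOp l) : embed b (c • M) = c • embed b M := by
  ext ε ε'
  simp only [embed, Matrix.of_apply, Matrix.smul_apply, smul_eq_mul]
  split_ifs <;> simp

lemma embed_sum (b : Fin Ns) {α : Type*} (s : Finset α) (M : α → SpinOp l) :
    embed b (∑ x ∈ s, M x) = ∑ x ∈ s, embed b (M x) := by
  ext ε ε'
  simp only [embed, Matrix.of_apply, Matrix.sum_apply]
  split_ifs <;> simp

def replaceBlock (b : Fin Ns) (ε : FIdx2 l Ns) (τ : SpinIdx l) : FIdx2 l Ns :=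
  fun s => if s.1 = b then τ s.2 else ε s

lemma replaceBlock_injective (b : Fin Ns) (ε : FIdx2 l Ns) :
    Function.Injective (replaceBlock b ε) := fun τ τ' h =>
  funext fun β => by simpa [replaceBlock] using congrFun h (b, β)

lemma eq_replaceBlock {b : Fin Ns} {ε ε' : FIdx2 l Ns}
    (h : ∀ s : FSite l Ns, s.1 ≠ b → ε s = ε' s) :
    ε' = replaceBlock b ε fun β => ε' (b, β) := by
  funext ⟨c, β⟩
  by_cases hc : c = b
  · subst hc
    simp [replaceBlock]
  · simp [replaceBlock, hc, h (c, β) hc]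

lemma embed_mul (b : Fin Ns) (M N : SpinOp l) : embed b M * embed b N = embed b (M * N) := by
  ext ε ε'
  simp only [Matrix.mul_apply, embed, Matrix.of_apply]
  by_cases hC : ∀ s : FSite l Ns, s.1 ≠ b → ε s = ε' s
  · rw [if_pos hC]
    -- only configurations agreeing with `ε` off block `b` contribute: they are `replaceBlock b ε τ`
    refine (Fintype.sum_of_injective (replaceBlock b ε) (replaceBlock_injective b ε) _ _
      (fun ε'' hε'' => ?_) (fun τ => ?_)).symm
    · rw [if_neg fun h => hε'' ⟨_, (eq_replaceBlock h).symm⟩, zero_mul]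
    · have h₁ : ∀ s : FSite l Ns, s.1 ≠ b → ε s = replaceBlock b ε τ s := fun s hs => by
        simp [replaceBlock, hs]
      rw [if_pos h₁, if_pos fun s hs => (h₁ s hs).symm.trans (hC s hs)]
      simp [replaceBlock]
  · rw [if_neg hC]
    refine sum_eq_zero fun ε'' _ => ?_
    by_cases h₁ : ∀ s : FSite l Ns, s.1 ≠ b → ε s = ε'' s
    · have h₂ : ¬∀ s : FSite l Ns, s.1 ≠ b → ε'' s = ε' s := fun h₂ =>
        hC fun s hs => (h₁ s hs).trans (h₂ s hs)
      rw [if_neg h₂, mul_zero]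
    · rw [if_neg h₁, zero_mul]

lemma downWeight_sub_of_eqOn {b : Fin Ns} (w : FSite l Ns → ℂ) {ε ε' : FIdx2 l Ns}
    (h : ∀ s : FSite l Ns, s.1 ≠ b → ε s = ε' s) :
    downWeight w ε - downWeight w ε' =
      downWeight (fun β => w (b, β)) (fun β => ε (b, β)) -
        downWeight (fun β => w (b, β)) (fun β => ε' (b, β)) := by
  simp only [downWeight, Fintype.sum_prod_type, ← sum_sub_distrib]
  refine sum_eq_single b (fun c _ hc => sum_eq_zero fun β _ => ?_) (by simp)
  rw [h (c, β) hc, sub_self]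

lemma gaugeM_conj_embed (w : FSite l Ns → ℂ) (b : Fin Ns) (M : SpinOp l) :
    gaugeM w * embed b M * (gaugeM w)⁻¹ =
      embed b (gaugeM (fun β => w (b, β)) * M * (gaugeM fun β => w (b, β))⁻¹) := by
  rw [gaugeM_mul_mul_inv, gaugeM_mul_mul_inv]
  ext ε ε'
  simp only [embed, Matrix.of_apply]
  split_ifs with h
  · rw [downWeight_sub_of_eqOn w h]
  · rw [mul_zero]

end Embed

lemma cast_mul_sub_one_div_two (n : ℕ) :
    (((n : ℤ) * ((n : ℤ) - 1) / 2 : ℤ) : ℂ) = n * (n - 1) / 2 := by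
  rw [Int.cast_div (Int.even_mul_pred_self n).two_dvd (by norm_num)]
  push_cast
  ring

lemma exp_zpow (η : ℂ) (t : ℤ) : Complex.exp η ^ t = Complex.exp (η * t) := by
  rw [mul_comm, Complex.exp_int_mul]

def gaugeRatio (x η : ℂ) (l j : ℕ) : ℂ :=
  Complex.exp (-(j * x) + η * (j * l - ((j * ((j : ℤ) - 1) / 2 : ℤ) : ℂ) - j))

section StringGauge

variable {l : ℕ} (x η : ℂ)

lemma sum_string_eq_siteSum (C : Finset (Fin l)) :
    ∑ a ∈ C, (x - (a : ℂ) * η) = C.card * x - η * (siteSum C - C.card) := by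
  simp only [siteSum, sum_sub_distrib, sum_const, nsmul_eq_mul, ← sum_mul]
  push_cast
  rw [sum_add_distrib]
  simp only [sum_const, nsmul_eq_mul, mul_one, add_sub_cancel_right, sub_right_inj]
  ring

lemma exp_neg_sum_string {j : ℕ} {B : Finset (Fin l)} (hB : B.card = j) :
    Complex.exp (-∑ b ∈ B, (x - (b : ℂ) * η)) = gaugeRatio x η l j * hwt (Complex.exp η) j B := by
  rw [gaugeRatio, hwt, exp_zpow, ← Complex.exp_add, sum_string_eq_siteSum, hB]
  push_cast
  ring_nf

lemma sum_exp_neg_sum_string_smul_bvec (j : ℕ) :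
    ∑ B ∈ powersetCard j (univ : Finset (Fin l)),
        Complex.exp (-∑ b ∈ B, (x - (b : ℂ) * η)) • bvec B =
      gaugeRatio x η l j • hv (Complex.exp η) l j := by
  rw [hv, smul_sum]
  refine sum_congr rfl fun B hB => ?_
  rw [exp_neg_sum_string x η (mem_powersetCard_univ.mp hB), smul_smul]

lemma sum_gaugeM_conj_rankOne_bvec (A : Finset (Fin l)) (j : ℕ) :
    ∑ B ∈ powersetCard j univ,
        gaugeM (fun β : Fin l => x - β * η) * rankOne (bvec A) (bvec B) *
          (gaugeM fun β : Fin l => x - β * η)⁻¹ =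
      (Complex.exp (∑ a ∈ A, (x - (a : ℂ) * η)) * gaugeRatio x η l j) •
        rankOne (bvec A) (hv (Complex.exp η) l j) := by
  have hterm : ∀ B : Finset (Fin l),
      gaugeM (fun β : Fin l => x - β * η) * rankOne (bvec A) (bvec B) *
          (gaugeM fun β : Fin l => x - β * η)⁻¹ =
        Complex.exp (∑ a ∈ A, (x - (a : ℂ) * η)) •
          vecMulVecBilin ℂ ℂ (bvec A) (Complex.exp (-∑ b ∈ B, (x - (b : ℂ) * η)) • bvec B) :=
    fun B => by
      rw [gaugeM_conj_rankOne_bvec, sub_eq_add_neg, Complex.exp_add, mul_smul, map_smul,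
        vecMulVecBilin_apply_apply, rankOne_eq_vecMulVec]
  rw [sum_congr rfl fun B _ => hterm B, ← smul_sum, ← map_sum,
    sum_exp_neg_sum_string_smul_bvec, map_smul, smul_smul, vecMulVecBilin_apply_apply,
    rankOne_eq_vecMulVec]

end StringGauge

lemma Nhat_mul_gauge_factors_eq {l : ℕ} (x η : ℂ) (g : ℕ → ℂ) {i : ℕ} (j : ℕ)
    {A : Finset (Fin l)} (hQ : qbinom (Complex.exp η) l i ≠ 0) (hA : A.card = i) :
    Nhat (Complex.exp η) η g l i j * Complex.exp (-((i - j) * (x - (l - 1) * η / 2))) *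
        (Complex.exp (∑ a ∈ A, (x - (a : ℂ) * η)) * gaugeRatio x η l j *
          cv (Complex.exp η) l i (indFun A)) =
      g j / g i *
        ((qbinom (Complex.exp η) l j)⁻¹ * Complex.exp η ^ ((j : ℤ) * ((l : ℤ) - j))) := by
  rw [cv_eq_smul_hv, Pi.smul_apply, hv_apply_indFun, if_pos hA, hwt, smul_eq_mul,
    sum_string_eq_siteSum, hA]
  simp only [Nhat, Fnorm, gaugeRatio, exp_zpow]
  field_simp
  congr 1
  simp only [mul_assoc, ← Complex.exp_add]
  congr 2
  push_cast
  rw [cast_mul_sub_one_div_two, cast_mul_sub_one_div_two]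
  ring

theorem reduction_general_elementary_general (ℓ Ns : ℕ)
    (η : ℂ) (ξ : Fin Ns → ℂ)
    (hroot : ∀ m : ℕ, 1 ≤ m → m ≤ ℓ → Complex.exp η ^ (2 * m) ≠ 1)
    (g : ℕ → ℂ)
    (k : Fin Ns) (i j : ℕ)
    (A : Finset (Fin ℓ)) (hA : A.card = i) :
    embed k ((g j / g i) •
        rankOne (hv (Complex.exp η) ℓ i) (cv (Complex.exp η) ℓ j))
      = (Nhat (Complex.exp η) η g ℓ i j *
          Complex.exp (-(((i : ℂ) - (j : ℂ)) * (ξ k - ((ℓ : ℂ) - 1) * η / 2)))) •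
        (embed k (proj (Complex.exp η) ℓ) *
          ∑ B ∈ Finset.powersetCard j (Finset.univ : Finset (Fin ℓ)),
            gaugeM (wstring ℓ Ns η ξ) * embed k (rankOne (bvec A) (bvec B)) *
              (gaugeM (wstring ℓ Ns η ξ))⁻¹) := by
  have hi : i ≤ ℓ := hA ▸ (card_le_univ A).trans_eq (Fintype.card_fin ℓ)
  simp only [gaugeM_conj_embed]
  rw [← embed_sum,
    show (fun β => wstring ℓ Ns η ξ (k, β)) = fun β : Fin ℓ => ξ k - β * η from rfl,
    sum_gaugeM_conj_rankOne_bvec, embed_mul, Matrix.mul_smul]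
  simp only [rankOne_eq_vecMulVec]
  rw [Matrix.mul_vecMulVec, proj_mulVec_bvec, hA, Matrix.smul_vecMulVec, smul_smul,
    cv_eq_smul_hv _ j, Matrix.vecMulVec_smul]
  simp only [embed_smul, smul_smul]
  congr 1
  exact (Nhat_mul_gauge_factors_eq _ η g j
    (qbinom_ne_zero (Complex.exp_ne_zero η) hroot hi) hA).symm

/-- Reduction of the general spin-`ℓ/2` elementary operator at site `k`
of the blocked chain of `N_s` blocks of `ℓ` spin-1/2 sites: for every fixed `A` with
`|A| = i`,
`Ê_k^{i,j(ℓ p)} = N̂_{i,j} e^{−(i−j)Λ_k} P^{(ℓ)}_{[k]}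
  Σ_{|B|=j} χ_{1…L} (|1_A⟩⟨1_B| on block k) χ_{1…L}^{−1}`,
with `Λ_k = ξ_k − (ℓ−1)η/2` and `χ_{1…L} = ⊗_m diag(1, e^{w^{(ℓ)}_m})`. -/
theorem reduction_general_elementary (ℓ Ns : ℕ) (hl : 1 ≤ ℓ) (hNs : 1 ≤ Ns)
    (η : ℂ) (ξ : Fin Ns → ℂ)
    (hroot : ∀ m : ℕ, 1 ≤ m → m ≤ ℓ → Complex.exp η ^ (2 * m) ≠ 1)
    (g : ℕ → ℂ) (hg : ∀ n, n ≤ ℓ → g n ≠ 0)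
    (k : Fin Ns) (i j : ℕ) (hi : i ≤ ℓ) (hj : j ≤ ℓ)
    (A : Finset (Fin ℓ)) (hA : A.card = i) :
    embed k ((g j / g i) •
        rankOne (hv (Complex.exp η) ℓ i) (cv (Complex.exp η) ℓ j))
      = (Nhat (Complex.exp η) η g ℓ i j *
          Complex.exp (-(((i : ℂ) - (j : ℂ)) * (ξ k - ((ℓ : ℂ) - 1) * η / 2)))) •
        (embed k (proj (Complex.exp η) ℓ) *
          ∑ B ∈ Finset.powersetCard j (Finset.univ : Finset (Fin ℓ)),
            gaugeM (wstring ℓ Ns η ξ) * embed k (rankOne (bvec A) (bvec B)) *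
              (gaugeM (wstring ℓ Ns η ξ))⁻¹) :=
  reduction_general_elementary_general ℓ Ns η ξ hroot g k i j A hA
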